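/- Let τ > 0 and let C_τ(a) = a·min(1, τ/|a|) be the clipping operator. For Y ~ N(μ_t, 1) with |μ_t| ≤ τ, define μ_{t+1} = μ_t − E[C_τ(Y)]. Then |μ_{t+1}| ≤ (3/2 − Φ(τ))·|μ_t|, where Φ is the standard Gaussian CDF. -/

import Mathlib

/-!
Since `y - C_τ(y) = (y - τ)⁺ - (-y - τ)⁺`, writing `ψ(a) = 𝔼[(Z - a)⁺]` for `Z ~ N(0, 1)`, translation
and the symmetry of `Z` give `μ - 𝔼[C_τ(Y)] = ψ(τ - μ) - ψ(τ + μ)`. For `a ≤ b` one has pointwise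
`0 ≤ (z - a)⁺ - (z - b)⁺ ≤ (b - a) 𝟙{z > a}`, so `ψ` is antitone and `ψ(a) - ψ(b) ≤ (b - a)(1 - Φ(a))`.
Splitting `[τ - |μ|, τ + |μ|]` at `τ` and using `Φ(τ - |μ|) ≥ Φ(0) = 1/2` bounds the difference by
`|μ|/2 + |μ|(1 - Φ(τ))`.
-/

open MeasureTheory ProbabilityTheory Set

/-- Clipping operator `C_τ(a) = a * min(1, τ/|a|)`. -/
noncomputable def clip (τ a : ℝ) : ℝ := a * min 1 (τ / |a|)

/-- Standard Gaussian CDF. -/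
noncomputable def Phi (x : ℝ) : ℝ := ((gaussianReal 0 1) (Set.Iic x)).toReal

lemma sub_clip_eq {τ : ℝ} (hτ : 0 ≤ τ) (y : ℝ) :
    y - clip τ y = max (y - τ) 0 - max (-y - τ) 0 := by
  unfold clip
  rcases eq_or_ne y 0 with rfl | hy
  · simp [hτ]
  have hy' : 0 < |y| := abs_pos.2 hy
  rcases le_or_gt |y| τ with h | h
  · rw [min_eq_left ((one_le_div hy').2 h), max_eq_right (by linarith [le_abs_self y]),
      max_eq_right (by linarith [neg_abs_le y])]
    ring
  rw [min_eq_right ((div_le_one hy').2 h.le)]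
  rcases lt_abs.1 h with h | h
  · rw [abs_of_pos (by linarith), max_eq_left (by linarith), max_eq_right (by linarith)]
    field_simp
    ring
  · rw [abs_of_neg (by linarith), max_eq_right (by linarith), max_eq_left (by linarith)]
    field_simp
    ring

noncomputable def stopLoss (ν : Measure ℝ) (a : ℝ) : ℝ := ∫ x, max (x - a) 0 ∂ν

lemma stopLoss_map_add_const (ν : Measure ℝ) (c a : ℝ) :
    stopLoss (ν.map (· + c)) a = stopLoss ν (a - c) := by
  rw [stopLoss, integral_map (by fun_prop) (by fun_prop)]
  simp only [stopLoss, sub_sub_eq_add_sub]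

section StopLoss

variable {ν : Measure ℝ} [IsFiniteMeasure ν]

lemma integrable_max_sub_const (hν : Integrable (fun x => x) ν) (a : ℝ) :
    Integrable (fun x => max (x - a) 0) ν :=
  (hν.sub (integrable_const a)).pos_part

lemma stopLoss_antitone (hν : Integrable (fun x => x) ν) : Antitone (stopLoss ν) := fun a b hab =>
  integral_mono (integrable_max_sub_const hν b) (integrable_max_sub_const hν a)
    fun x => max_le_max (by linarith) le_rfl

lemma stopLoss_sub_stopLoss_le (hν : Integrable (fun x => x) ν) {a b : ℝ} (hab : a ≤ b) :
    stopLoss ν a - stopLoss ν b ≤ (b - a) * ν.real (Ioi a) := by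
  have hpointwise : ∀ x, max (x - a) 0 - max (x - b) 0 ≤ (Ioi a).indicator (fun _ => b - a) x := by
    intro x
    by_cases hx : a < x
    · rw [indicator_of_mem (show x ∈ Ioi a from hx)]
      rcases le_total x b with h | h
      · rw [max_eq_left (by linarith), max_eq_right (by linarith)]; linarith
      · rw [max_eq_left (by linarith), max_eq_left (by linarith)]; linarith
    · rw [indicator_of_notMem (show x ∉ Ioi a from hx), max_eq_right (by linarith),
        max_eq_right (by linarith)]
      simp
  calc stopLoss ν a - stopLoss ν b = ∫ x, (max (x - a) 0 - max (x - b) 0) ∂ν :=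
        (integral_sub (integrable_max_sub_const hν a) (integrable_max_sub_const hν b)).symm
    _ ≤ ∫ x, (Ioi a).indicator (fun _ => b - a) x ∂ν :=
        integral_mono ((integrable_max_sub_const hν a).sub (integrable_max_sub_const hν b))
          ((integrable_const _).indicator measurableSet_Ioi) hpointwise
    _ = (b - a) * ν.real (Ioi a) := by
        rw [integral_indicator_const _ measurableSet_Ioi, smul_eq_mul, mul_comm]

lemma integral_id_sub_integral_clip (hν : Integrable (fun x => x) ν) {τ : ℝ} (hτ : 0 ≤ τ) :
    ∫ y, y ∂ν - ∫ y, clip τ y ∂ν = stopLoss ν τ - stopLoss (ν.map (fun x => -x)) τ := by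
  have hneg : stopLoss (ν.map (fun x => -x)) τ = ∫ y, max (-y - τ) 0 ∂ν :=
    integral_map (by fun_prop) (by fun_prop)
  have hint_neg : Integrable (fun y => max (-y - τ) 0) ν := (hν.neg.sub (integrable_const τ)).pos_part
  have hint_clip : Integrable (fun y => clip τ y) ν := by
    refine (hν.sub ((integrable_max_sub_const hν τ).sub hint_neg)).congr (.of_forall fun y => ?_)
    simp only [Pi.sub_apply, ← sub_clip_eq hτ y, sub_sub_cancel]
  rw [← integral_sub hν hint_clip]
  simp_rw [sub_clip_eq hτ]
  rw [integral_sub (integrable_max_sub_const hν τ) hint_neg, hneg, stopLoss]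

end StopLoss

lemma Antitone.abs_apply_sub_sub_apply_add {f : ℝ → ℝ} (hf : Antitone f) (c x : ℝ) :
    |f (c - x) - f (c + x)| = f (c - |x|) - f (c + |x|) := by
  rcases le_total 0 x with hx | hx
  · rw [abs_of_nonneg hx, abs_of_nonneg (sub_nonneg.2 (hf (by linarith)))]
  · rw [abs_of_nonpos hx, abs_of_nonpos (sub_nonpos.2 (hf (by linarith)))]
    ring_nf

lemma one_sub_Phi (a : ℝ) : 1 - Phi a = (gaussianReal 0 1).real (Ioi a) := by
  rw [← compl_Iic, probReal_compl_eq_one_sub measurableSet_Iic, Phi, measureReal_def]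

lemma Phi_mono : Monotone Phi := fun _ _ hab =>
  measureReal_mono (Iic_subset_Iic.2 hab)

lemma Phi_zero : Phi 0 = 1 / 2 := by
  have := nullSingletonClass_gaussianReal (μ := 0) one_ne_zero
  have hneg : (gaussianReal 0 1).map (fun x => -x) = gaussianReal 0 1 := by
    rw [gaussianReal_map_neg, neg_zero]
  have hsymm : Phi 0 = (gaussianReal 0 1).real (Ioi 0) := calc
    Phi 0 = ((gaussianReal 0 1).map (fun x => -x)).real (Iic 0) := by rw [hneg, Phi, measureReal_def]
    _ = (gaussianReal 0 1).real (Ici 0) := by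
      rw [map_measureReal_apply measurable_neg measurableSet_Iic]; simp
    _ = (gaussianReal 0 1).real (Ioi 0) :=
      measureReal_congr (Ioi_ae_eq_Ici' (measure_singleton 0)).symm
  linarith [one_sub_Phi 0]

lemma integrable_id_gaussianReal (μ : ℝ) : Integrable (fun x => x) (gaussianReal μ 1) :=
  (memLp_id_gaussianReal 1).integrable le_rfl

lemma stopLoss_gaussianReal (μ a : ℝ) :
    stopLoss (gaussianReal μ 1) a = stopLoss (gaussianReal 0 1) (a - μ) := by
  rw [← stopLoss_map_add_const, gaussianReal_map_add_const, zero_add]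

lemma stopLoss_gaussianReal_sub_le {a b : ℝ} (hab : a ≤ b) :
    stopLoss (gaussianReal 0 1) a - stopLoss (gaussianReal 0 1) b ≤ (b - a) * (1 - Phi a) := by
  rw [one_sub_Phi]
  exact stopLoss_sub_stopLoss_le (integrable_id_gaussianReal 0) hab

theorem stmt0 (τ μt : ℝ) (hτ : 0 < τ) (hμ : |μt| ≤ τ) :
    |μt - ∫ y, clip τ y ∂(gaussianReal μt 1)| ≤ (3 / 2 - Phi τ) * |μt| := by
  set ψ := stopLoss (gaussianReal 0 1)
  have hdiff : μt - ∫ y, clip τ y ∂(gaussianReal μt 1) = ψ (τ - μt) - ψ (τ + μt) := by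
    have h := integral_id_sub_integral_clip (integrable_id_gaussianReal μt) hτ.le
    rwa [integral_id_gaussianReal, gaussianReal_map_neg, stopLoss_gaussianReal μt,
      stopLoss_gaussianReal (-μt), sub_neg_eq_add] at h
  rw [hdiff, (stopLoss_antitone (integrable_id_gaussianReal 0)).abs_apply_sub_sub_apply_add]
  have hm : 0 ≤ |μt| := abs_nonneg μt
  have hΦ : 1 / 2 ≤ Phi (τ - |μt|) := Phi_zero ▸ Phi_mono (by linarith)
  calc ψ (τ - |μt|) - ψ (τ + |μt|) = (ψ (τ - |μt|) - ψ τ) + (ψ τ - ψ (τ + |μt|)) := by ring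
    _ ≤ |μt| * (1 - Phi (τ - |μt|)) + |μt| * (1 - Phi τ) := by
      gcongr
      · simpa using stopLoss_gaussianReal_sub_le (a := τ - |μt|) (b := τ) (by linarith)
      · simpa using stopLoss_gaussianReal_sub_le (a := τ) (b := τ + |μt|) (by linarith)
    _ ≤ |μt| * (1 / 2) + |μt| * (1 - Phi τ) := by gcongr; linarith
    _ = (3 / 2 - Phi τ) * |μt| := by ring
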